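/- arXiv:1706.08147 — 7 statements merged into one kernel-verified Lean document; each statement's English description precedes it below -/
import Mathlib

section
/- For each x in a Banach space E, the evaluation function δ_x : E* → ℝ given by δ_x(x*) = x*(x) satisfies ||δ_x||_{FBL[E]} = ||x||_E; consequently the map x ↦ δ_x is a linear isometry from E into H_0[E]. -/
open scoped ENNReal

noncomputable section

/-- `f : E* → ℝ` is positively homogeneous. -/
def PosHom {E : Type*} [NormedAddCommGroup E] [NormedSpace ℝ E]
    (f : StrongDual ℝ E → ℝ) : Prop :=
  ∀ (c : ℝ), 0 ≤ c → ∀ x, f (c • x) = c * f x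

/-- A finite list of functionals `x_1*, …, x_n*` with `sup_{x ∈ B_E} Σ |x_k*(x)| ≤ 1`. -/
def Admissible {E : Type*} [NormedAddCommGroup E] [NormedSpace ℝ E]
    (l : List (StrongDual ℝ E)) : Prop :=
  ∀ x : E, ‖x‖ ≤ 1 → (l.map (fun φ => |φ x|)).sum ≤ 1

/-- The free Banach lattice norm `‖f‖_{FBL[E]}` (possibly infinite). -/
def fblNorm {E : Type*} [NormedAddCommGroup E] [NormedSpace ℝ E]
    (f : StrongDual ℝ E → ℝ) : ℝ≥0∞ :=
  ⨆ l : {l : List (StrongDual ℝ E) // Admissible l},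
    ENNReal.ofReal ((l.1.map (fun φ => |f φ|)).sum)

/-! Testing an admissible family at `x / ‖x‖` bounds `Σ |x_k*(x)|` by `‖x‖`; a Hahn–Banach
norming functional of `x` forms an admissible family on its own and attains this bound. -/

section

variable {E : Type*} [NormedAddCommGroup E] [NormedSpace ℝ E]

theorem sum_map_abs_apply_smul (l : List (StrongDual ℝ E)) (c : ℝ) (x : E) :
    (l.map fun φ => |φ (c • x)|).sum = |c| * (l.map fun φ => |φ x|).sum := by
  rw [← List.sum_map_mul_left]
  simp only [map_smul, smul_eq_mul, abs_mul]

theorem Admissible.sum_map_abs_apply_le {l : List (StrongDual ℝ E)} (hl : Admissible l) (x : E) :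
    (l.map fun φ => |φ x|).sum ≤ ‖x‖ := by
  rcases eq_or_ne x 0 with rfl | hx
  · simp
  have hx_pos : 0 < ‖x‖ := norm_pos_iff.mpr hx
  have hunit : ‖‖x‖⁻¹ • x‖ ≤ 1 := by
    rw [norm_smul, norm_inv, norm_norm, inv_mul_cancel₀ hx_pos.ne']
  have := hl _ hunit
  rw [sum_map_abs_apply_smul, abs_of_pos (inv_pos.mpr hx_pos)] at this
  rwa [inv_mul_le_iff₀ hx_pos, mul_one] at this

theorem admissible_singleton {g : StrongDual ℝ E} (hg : ‖g‖ ≤ 1) : Admissible [g] := by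
  intro y hy
  simpa using (g.le_opNorm y).trans (mul_le_one₀ hg (norm_nonneg y) hy)

theorem fblNorm_eval (x : E) : fblNorm (fun φ : StrongDual ℝ E => φ x) = ENNReal.ofReal ‖x‖ := by
  apply le_antisymm
  · exact iSup_le fun l => ENNReal.ofReal_le_ofReal (l.2.sum_map_abs_apply_le x)
  · obtain ⟨g, hg, hgx⟩ := exists_dual_vector'' ℝ x
    refine le_trans ?_ (le_iSup _ ⟨[g], admissible_singleton hg⟩)
    simp [hgx]

end

theorem stmt2_general {E : Type*} [NormedAddCommGroup E] [NormedSpace ℝ E] :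
    (∀ x : E, fblNorm (fun φ : StrongDual ℝ E => φ x) = ENNReal.ofReal ‖x‖) ∧
    (∀ x y : E, (fun φ : StrongDual ℝ E => φ (x + y)) =
      (fun φ : StrongDual ℝ E => φ x) + (fun φ : StrongDual ℝ E => φ y)) ∧
    (∀ (c : ℝ) (x : E), (fun φ : StrongDual ℝ E => φ (c • x)) =
      c • (fun φ : StrongDual ℝ E => φ x)) :=
  ⟨fblNorm_eval, fun x y => funext fun φ => map_add φ x y,
    fun c x => funext fun φ => map_smul φ c x⟩

/-- `‖δ_x‖_{FBL[E]} = ‖x‖` and `x ↦ δ_x` is a linear isometry into `H_0[E]`. -/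
theorem stmt2 {E : Type*} [NormedAddCommGroup E] [NormedSpace ℝ E] [CompleteSpace E] :
    (∀ x : E, fblNorm (fun φ : StrongDual ℝ E => φ x) = ENNReal.ofReal ‖x‖) ∧
    (∀ x y : E, (fun φ : StrongDual ℝ E => φ (x + y)) =
      (fun φ : StrongDual ℝ E => φ x) + (fun φ : StrongDual ℝ E => φ y)) ∧
    (∀ (c : ℝ) (x : E), (fun φ : StrongDual ℝ E => φ (c • x)) =
      c • (fun φ : StrongDual ℝ E => φ x)) :=
  stmt2_general
end
end

section
/- The function f : ℓ∞ → ℝ defined by f(x) = sup_{n ≥ 1} |x(n)|/n satisfies ||f||_{FBL[ℓ1]} = ∞, where ||f||_{FBL[ℓ1]} := sup { Σ_{k=1}^n |f(x_k)| : x_1,…,x_n ∈ ℓ∞, sup_{a ∈ ℕ} Σ_{k=1}^n |x_k(a)| ≤ 1 }. -/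
/-! The unit vectors `e_k` of `c₀` have disjoint supports, so every finite family of them is
admissible; hence a finite `FBL[ℓ₁]` norm forces `k ↦ |f(e_k)|` to be summable. Here
`f(e_k) = 1/(k+1)`, the harmonic series. -/

open scoped ENNReal

noncomputable section

/-- Positive homogeneity for functions on `ℓ∞(A)` (the dual of `ℓ1(A)`). -/
def PosHomA {A : Type*} (f : lp (fun _ : A => ℝ) ⊤ → ℝ) : Prop :=
  ∀ (c : ℝ), 0 ≤ c → ∀ x, f (c • x) = c * f x

/-- `x_1*, …, x_n* ∈ ℓ∞(A)` with `sup_{a ∈ A} Σ |x_k*(a)| ≤ 1`. -/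
def AdmissibleA {A : Type*} (l : List (lp (fun _ : A => ℝ) ⊤)) : Prop :=
  ∀ a : A, (l.map (fun x => |x a|)).sum ≤ 1

/-- The norm `‖f‖_{FBL[ℓ1(A)]}` (possibly infinite). -/
def fblNormA {A : Type*} (f : lp (fun _ : A => ℝ) ⊤ → ℝ) : ℝ≥0∞ :=
  ⨆ l : {l : List (lp (fun _ : A => ℝ) ⊤) // AdmissibleA l},
    ENNReal.ofReal ((l.1.map (fun x => |f x|)).sum)

section FBLNorm

variable {A : Type*}

theorem ofReal_sum_abs_le_fblNormA (f : lp (fun _ : A => ℝ) ⊤ → ℝ)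
    {l : List (lp (fun _ : A => ℝ) ⊤)} (hl : AdmissibleA l) :
    ENNReal.ofReal (l.map fun x => |f x|).sum ≤ fblNormA f :=
  le_iSup (fun l : {l // AdmissibleA l} => ENNReal.ofReal (l.1.map fun x => |f x|).sum) ⟨l, hl⟩

theorem admissibleA_single [DecidableEq A] (s : Finset A) :
    AdmissibleA (s.toList.map fun i => lp.single ⊤ i (1 : ℝ)) := by
  intro a
  rw [List.map_map, Finset.sum_map_toList]
  calc ∑ i ∈ s, |lp.single ⊤ i (1 : ℝ) a| = ∑ i ∈ s, if a = i then 1 else 0 := by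
        refine Finset.sum_congr rfl fun i _ => ?_
        by_cases h : a = i <;> simp [h]
    _ ≤ 1 := by rw [Finset.sum_ite_eq]; split_ifs <;> norm_num

theorem fblNormA_eq_top_of_not_summable [DecidableEq A] (f : lp (fun _ : A => ℝ) ⊤ → ℝ)
    (hf : ¬ Summable fun i => |f (lp.single ⊤ i 1)|) : fblNormA f = ∞ := by
  by_contra hfin
  refine hf (summable_of_sum_le (c := (fblNormA f).toReal) (fun _ => abs_nonneg _) fun s => ?_)
  have hs := ofReal_sum_abs_le_fblNormA f (admissibleA_single s)
  rwa [List.map_map, Finset.sum_map_toList, ENNReal.ofReal_le_iff_le_toReal hfin] at hs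

end FBLNorm

theorem iSup_abs_div_succ_single (k : ℕ) (c : ℝ) :
    ⨆ n : ℕ, |lp.single (E := fun _ : ℕ => ℝ) ⊤ k c n| / (n + 1) = |c| / (k + 1) := by
  have hle : ∀ n : ℕ, |lp.single (E := fun _ : ℕ => ℝ) ⊤ k c n| / (n + 1) ≤ |c| / (k + 1) := by
    intro n
    by_cases h : n = k
    · simp [h]
    · rw [lp.single_apply_ne _ _ _ h, abs_zero, zero_div]
      positivity
  refine le_antisymm (ciSup_le hle) ?_
  simpa [lp.single_apply_self] using le_ciSup ⟨_, Set.forall_mem_range.2 hle⟩ k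

/-- the function `f(x) = sup_n |x(n)|/n` on `ℓ∞` has `‖f‖_{FBL[ℓ1]} = ∞`. -/
theorem stmt5 :
    fblNormA (fun x : lp (fun _ : ℕ => ℝ) ⊤ => ⨆ n : ℕ, |x n| / (n + 1)) = ∞ := by
  refine fblNormA_eq_top_of_not_summable _ ?_
  simp only [iSup_abs_div_succ_single, abs_one, summable_abs_iff]
  exact_mod_cast (summable_nat_add_iff 1).not.2 Real.not_summable_one_div_natCast
end
end

section
/- Let E be an infinite-dimensional Banach space with density character κ. Then there exist δ > 0 and a linearly independent set S contained in the unit sphere of E with |S| = κ such that ||x − λx'|| ≥ δ for all distinct x, x' ∈ S and all real λ. -/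
/-!
Riesz's lemma, run transfinitely. If `#s < dens E` then `span s` is not dense: a finite `s`
spans a closed proper subspace, and for infinite `s` the spans of the finite subsets of `s` are
separable, which yields a dense set of cardinality `#s`. So along the initial well-order of
`dens E` one can choose unit vectors `x i` at distance `≥ 1/2` from `span {x j | j < i}`. Such a
family is linearly independent and `‖x i - λ x j‖ ≥ 1/2` for `j < i`; for `j > i` one gets
`‖x i - λ x j‖ ≥ 1/3` from `1 - |λ|` when `λ` is small and from `|λ| / 2` otherwise.
-/

noncomputable section

/-- The density character of a topological space: the least cardinality of a dense subset. -/
def densChar (α : Type*) [TopologicalSpace α] : Cardinal :=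
  ⨅ s : {s : Set α // Dense s}, Cardinal.mk s

open Cardinal Set Submodule TopologicalSpace

theorem densChar_le_mk_of_dense {α : Type*} [TopologicalSpace α] {s : Set α} (hs : Dense s) :
    densChar α ≤ #s :=
  ciInf_le' _ (⟨s, hs⟩ : {s : Set α // Dense s})

theorem linearIndependent_of_notMem_span_image_Iio {ι K V : Type*} [LinearOrder ι]
    [DivisionRing K] [AddCommGroup V] [Module K V] {v : ι → V}
    (hv : ∀ i, v i ∉ span K (v '' Iio i)) : LinearIndependent K v := by
  classical
  rw [← linearIndepOn_univ_iff, linearIndepOn_iff_linearIndepOn_finset]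
  rintro t -
  induction t using Finset.induction_on_max with
  | empty => simp
  | insert a t hlt ih =>
    have hat : a ∉ t := fun h => lt_irrefl a (hlt a h)
    rw [Finset.coe_insert, linearIndepOn_insert (by exact_mod_cast hat)]
    exact ⟨ih, fun h => hv a (span_mono (image_mono fun x hx => hlt x hx) h)⟩

theorem exists_forall_image_Iio {ι α : Type*} [Preorder ι] [WellFoundedLT ι]
    {P : Set α → α → Prop} (h : ∀ (i : ι) (f : Iio i → α), ∃ x, P (range f) x) :
    ∃ v : ι → α, ∀ i, P (v '' Iio i) (v i) := by
  choose g hg using h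
  refine ⟨WellFoundedLT.fix fun i ih => g i fun j => ih j j.2, fun i => ?_⟩
  rw [WellFoundedLT.fix_eq, image_eq_range]
  exact hg i _

section Normed

variable {𝕜 E : Type*} [NormedField 𝕜] [NormedAddCommGroup E] [NormedSpace 𝕜 E]

theorem div_one_add_le_norm_sub_smul {x y : E} (hx : ‖x‖ = 1) (hy : ‖y‖ = 1) {ε : ℝ}
    (hε : 0 ≤ ε) (h : ∀ c : 𝕜, ε ≤ ‖y - c • x‖) (c : 𝕜) : ε / (1 + ε) ≤ ‖x - c • y‖ := by
  rcases le_or_gt ‖c‖ (1 / (1 + ε)) with hc | hc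
  · calc ε / (1 + ε) = 1 - 1 / (1 + ε) := by field_simp; ring
      _ ≤ ‖x‖ - ‖c • y‖ := by rw [hx, norm_smul, hy, mul_one]; linarith
      _ ≤ ‖x - c • y‖ := norm_sub_norm_le _ _
  · have hc0 : c ≠ 0 := by rintro rfl; simp at hc; linarith
    calc ε / (1 + ε) = 1 / (1 + ε) * ε := by ring
      _ ≤ ‖c‖ * ‖y - c⁻¹ • x‖ := mul_le_mul hc.le (h _) hε (norm_nonneg _)
      _ = ‖x - c • y‖ := by
        rw [← norm_smul, ← norm_neg, smul_sub, smul_inv_smul₀ hc0, neg_sub]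

end Normed

section Density

variable {𝕜 E : Type*} [NontriviallyNormedField 𝕜] [NormedAddCommGroup E] [NormedSpace 𝕜 E]

theorem infinite_of_dense_span [CompleteSpace 𝕜] (hinf : ¬ FiniteDimensional 𝕜 E) {s : Set E}
    (hd : Dense (span 𝕜 s : Set E)) : s.Infinite := by
  intro hs
  have := FiniteDimensional.span_of_finite 𝕜 hs
  have htop : span 𝕜 s = ⊤ := SetLike.coe_injective <| by
    rw [top_coe, ← (span 𝕜 s).closed_of_finiteDimensional.closure_eq, hd.closure_eq]
  exact hinf ⟨fg_def.2 ⟨s, hs, htop⟩⟩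

theorem densChar_le_mk_of_dense_span [CompleteSpace 𝕜] [SeparableSpace 𝕜]
    (hinf : ¬ FiniteDimensional 𝕜 E) {s : Set E} (hd : Dense (span 𝕜 s : Set E)) :
    densChar E ≤ #s := by
  classical
  have := (infinite_of_dense_span hinf hd).to_subtype
  let T : Finset s → Finset E := fun t => t.map (Function.Embedding.subtype _)
  choose c hc hspan_sub using fun t => (T t).finite_toSet.isSeparable.span (R := 𝕜)
  have hcover : (span 𝕜 s : Set E) ⊆ closure (⋃ t, c t) := by
    intro x hx
    obtain ⟨t, hts, hxt⟩ := mem_span_finite_of_mem_span hx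
    have ht : T (t.subtype (· ∈ s)) = t := Finset.subtype_map_of_mem hts
    exact closure_mono (subset_iUnion c _) (hspan_sub _ (ht ▸ hxt))
  calc densChar E ≤ #(⋃ t, c t) := densChar_le_mk_of_dense (hd.mono hcover).of_closure
    _ ≤ #(Finset s) * ⨆ t, #(c t) := mk_iUnion_le c
    _ ≤ #s * ℵ₀ := by
      rw [mk_finset_of_infinite]
      gcongr
      exact ciSup_le' fun t => le_aleph0_iff_set_countable.2 (hc t)
    _ = #s := mul_aleph0_eq (infinite_iff.1 ‹_›)

end Density

theorem exists_norm_eq_one_le_norm_sub_of_mk_lt_densChar {𝕜 E : Type*} [RCLike 𝕜]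
    [NormedAddCommGroup E] [NormedSpace 𝕜 E] (hinf : ¬ FiniteDimensional 𝕜 E) {s : Set E}
    (hs : #s < densChar E) {r : ℝ} (hr : r < 1) : ∃ x : E, ‖x‖ = 1 ∧ ∀ y ∈ span 𝕜 s, r ≤ ‖x - y‖ := by
  have hF : ∃ x, x ∉ (span 𝕜 s).topologicalClosure := by
    by_contra! h
    refine (densChar_le_mk_of_dense_span hinf ?_).not_gt hs
    rw [dense_iff_closure_eq, ← topologicalClosure_coe, Set.eq_univ_iff_forall]
    exact h
  obtain ⟨x, -, hx1, hx⟩ := riesz_lemma_of_lt_one (isClosed_topologicalClosure _) hF hr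
  exact ⟨x, hx1, fun y hy => hx y (le_topologicalClosure _ hy)⟩

theorem stmt6_general {E : Type*} [NormedAddCommGroup E] [NormedSpace ℝ E]
    (hinf : ¬ FiniteDimensional ℝ E) :
    ∃ δ : ℝ, 0 < δ ∧ ∃ S : Set E, S ⊆ Metric.sphere (0 : E) 1 ∧
      LinearIndependent ℝ ((↑) : S → E) ∧ Cardinal.mk S = densChar E ∧
      ∀ x ∈ S, ∀ x' ∈ S, x ≠ x' → ∀ l : ℝ, δ ≤ ‖x - l • x'‖ := by
  obtain ⟨v, hv⟩ := exists_forall_image_Iio (ι := (densChar E).ord.ToType)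
    (P := fun s x => ‖x‖ = 1 ∧ ∀ y ∈ span ℝ s, (2⁻¹ : ℝ) ≤ ‖x - y‖) fun i _ =>
      exists_norm_eq_one_le_norm_sub_of_mk_lt_densChar hinf
        (mk_range_le.trans_lt (by simpa using mk_Iio_lt i)) (by norm_num)
  have hli : LinearIndependent ℝ v :=
    linearIndependent_of_notMem_span_image_Iio fun i h => absurd ((hv i).2 _ h) (by norm_num)
  have hsep : ∀ i j, j < i → ∀ l : ℝ, 2⁻¹ ≤ ‖v i - l • v j‖ := fun i j hji l =>
    (hv i).2 _ (smul_mem _ _ (subset_span (mem_image_of_mem v hji)))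
  refine ⟨2⁻¹ / (1 + 2⁻¹), by norm_num, range v, ?_, hli.linearIndepOn_id, ?_, ?_⟩
  · rintro _ ⟨i, rfl⟩
    exact mem_sphere_zero_iff_norm.2 (hv i).1
  · rw [mk_range_eq v hli.injective, mk_ord_toType]
  · rintro _ ⟨i, rfl⟩ _ ⟨j, rfl⟩ hne l
    rcases lt_or_gt_of_ne (ne_of_apply_ne v hne) with hij | hji
    · exact div_one_add_le_norm_sub_smul (hv i).1 (hv j).1 (by norm_num) (hsep j i hij) l
    · exact (div_le_self (by norm_num) (by norm_num)).trans (hsep i j hji l)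

/-- in an infinite-dimensional Banach space `E` of density character `κ`, there are
`δ > 0` and a linearly independent set `S ⊆ S_E` of cardinality `κ` with `‖x - λ x'‖ ≥ δ`
for all distinct `x, x' ∈ S` and all scalars `λ`. -/
theorem stmt6 {E : Type*} [NormedAddCommGroup E] [NormedSpace ℝ E] [CompleteSpace E]
    (hinf : ¬ FiniteDimensional ℝ E) :
    ∃ δ : ℝ, 0 < δ ∧ ∃ S : Set E, S ⊆ Metric.sphere (0 : E) 1 ∧
      LinearIndependent ℝ ((↑) : S → E) ∧ Cardinal.mk S = densChar E ∧
      ∀ x ∈ S, ∀ x' ∈ S, x ≠ x' → ∀ l : ℝ, δ ≤ ‖x - l • x'‖ :=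
  stmt6_general hinf
end
end

section
/- Let A be a nonempty set and f ∈ H_0[ℓ1(A)]_+ a maximal element, i.e., the only g ∈ H_0[ℓ1(A)]_+ with g ≥ f pointwise and ||g||_{FBL[ℓ1(A)]} = ||f||_{FBL[ℓ1(A)]} is f itself. Then f is monotone with respect to absolute value: f(x*) ≤ f(y*) whenever x*, y* ∈ ℓ∞(A) satisfy |x*| ≤ |y*| pointwise. -/
open scoped ENNReal

noncomputable section

/-- `f` is a maximal element of `H_0[ℓ1(A)]_+`: it cannot be pointwise increased
without changing its FBL-norm. -/
def MaximalA {A : Type*} (f : lp (fun _ : A => ℝ) ⊤ → ℝ) : Prop :=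
  PosHomA f ∧ (∀ x, 0 ≤ f x) ∧ fblNormA f < ∞ ∧
    ∀ g : lp (fun _ : A => ℝ) ⊤ → ℝ, PosHomA g → (∀ x, 0 ≤ g x) → fblNormA g < ∞ →
      (∀ x, f x ≤ g x) → fblNormA g = fblNormA f → g = f

/-!
The envelope `g y := sup {f x : |x| ≤ |y|}` of `f` is monotone with respect to absolute value,
positively homogeneous and lies above `f`. It has the same FBL-norm as `f`: given an admissible
family `y₁, …, yₙ`, choose `xₖ` with `|xₖ| ≤ |yₖ|` and `f xₖ` almost equal to `g yₖ`; the family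
`x₁, …, xₙ` is again admissible, so `Σ g yₖ` is at most `Σ f xₖ + ε ≤ ‖f‖ + ε`.
Maximality of `f` then forces `f = g`.
-/

open scoped Pointwise

local notation "ℓ∞(" A ")" => lp (fun _ : A => ℝ) ⊤

theorem List.sum_map_le_of_forall_approx {α : Type*} (l : List α) (F : α → ℝ) (M : ℝ)
    (h : ∀ δ > 0, ∃ G : α → ℝ, (∀ y, F y ≤ G y + δ) ∧ (l.map G).sum ≤ M) :
    (l.map F).sum ≤ M := by
  refine le_of_forall_pos_le_add fun ε hε => ?_
  set δ := ε / (l.length + 1)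
  obtain ⟨G, hFG, hG⟩ := h δ (by positivity)
  have hlen : l.length * δ ≤ ε := by
    rw [mul_div_assoc']
    exact div_le_of_le_mul₀ (by positivity) hε.le (by nlinarith)
  calc (l.map F).sum ≤ (l.map fun y => G y + δ).sum := List.sum_le_sum fun y _ => hFG y
    _ = (l.map G).sum + l.length * δ := by
        rw [List.sum_map_add, List.map_const', List.sum_replicate, nsmul_eq_mul]
    _ ≤ M + ε := add_le_add hG hlen

section

variable {A : Type*}

theorem PosHomA.map_zero {f : ℓ∞(A) → ℝ} (hf : PosHomA f) : f 0 = 0 := by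
  simpa using hf 0 le_rfl 0

theorem AdmissibleA.map_of_abs_le {l : List ℓ∞(A)} (hl : AdmissibleA l)
    {p : ℓ∞(A) → ℓ∞(A)} (hp : ∀ y a, |p y a| ≤ |y a|) : AdmissibleA (l.map p) := fun a =>
  calc ((l.map p).map fun x => |x a|).sum = (l.map fun y => |p y a|).sum := by
        rw [List.map_map]; rfl
    _ ≤ (l.map fun y => |y a|).sum := List.sum_le_sum fun y _ => hp y a
    _ ≤ 1 := hl a

theorem ofReal_sum_le_fblNormA (f : ℓ∞(A) → ℝ) {l : List ℓ∞(A)} (hl : AdmissibleA l) :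
    ENNReal.ofReal (l.map fun x => |f x|).sum ≤ fblNormA f :=
  le_iSup (fun l : {l : List ℓ∞(A) // AdmissibleA l} =>
    ENNReal.ofReal (l.1.map fun x => |f x|).sum) ⟨l, hl⟩

theorem sum_le_toReal_fblNormA {f : ℓ∞(A) → ℝ} (hfin : fblNormA f ≠ ∞) {l : List ℓ∞(A)}
    (hl : AdmissibleA l) : (l.map fun x => |f x|).sum ≤ (fblNormA f).toReal :=
  (ENNReal.ofReal_le_iff_le_toReal hfin).1 (ofReal_sum_le_fblNormA f hl)

theorem fblNormA_le_ofReal {f : ℓ∞(A) → ℝ} {M : ℝ}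
    (h : ∀ l, AdmissibleA l → (l.map fun x => |f x|).sum ≤ M) :
    fblNormA f ≤ ENNReal.ofReal M :=
  iSup_le fun l => ENNReal.ofReal_le_ofReal (h l.1 l.2)

theorem fblNormA_mono {f g : ℓ∞(A) → ℝ} (h : ∀ x, |f x| ≤ |g x|) : fblNormA f ≤ fblNormA g :=
  iSup_mono fun _ => ENNReal.ofReal_le_ofReal (List.sum_le_sum fun x _ => h x)

theorem PosHomA.le_mul_toReal_fblNormA {f : ℓ∞(A) → ℝ} (hf : PosHomA f)
    (hfin : fblNormA f ≠ ∞) {x : ℓ∞(A)} {c : ℝ} (hc : 0 < c) (hx : ∀ a, |x a| ≤ c) :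
    f x ≤ c * (fblNormA f).toReal := by
  have hadm : AdmissibleA [c⁻¹ • x] := fun a => by
    simpa [abs_mul, abs_of_pos hc, inv_mul_le_iff₀ hc] using hx a
  have hbound := sum_le_toReal_fblNormA hfin hadm
  rw [List.map_singleton, List.sum_singleton] at hbound
  calc f x = c * f (c⁻¹ • x) := by rw [← hf c hc.le, smul_inv_smul₀ hc.ne']
    _ ≤ c * (fblNormA f).toReal :=
        mul_le_mul_of_nonneg_left ((le_abs_self _).trans hbound) hc.le

theorem setOf_abs_le_smul {c : ℝ} (hc : c ≠ 0) (y : ℓ∞(A)) :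
    {x : ℓ∞(A) | ∀ a, |x a| ≤ |(c • y) a|} = c • {x | ∀ a, |x a| ≤ |y a|} := by
  ext x
  simp only [Set.mem_smul_set_iff_inv_smul_mem₀ hc, Set.mem_ofPred_eq, lp.coeFn_smul,
    Pi.smul_apply, smul_eq_mul, abs_mul, abs_inv]
  exact forall_congr' fun a => (inv_mul_le_iff₀ (abs_pos.2 hc)).symm

theorem nonempty_setOf_abs_le (y : ℓ∞(A)) : {x : ℓ∞(A) | ∀ a, |x a| ≤ |y a|}.Nonempty :=
  ⟨y, fun _ => le_rfl⟩

-- `sSup` of a set unbounded above is `0` in `ℝ`; the envelope is meaningful when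
-- `fblNormA f < ∞` (see `bddAbove_image_setOf_abs_le`).
def absEnvelope (f : ℓ∞(A) → ℝ) (y : ℓ∞(A)) : ℝ :=
  sSup (f '' {x | ∀ a, |x a| ≤ |y a|})

theorem absEnvelope_le {f : ℓ∞(A) → ℝ} {y : ℓ∞(A)} {r : ℝ}
    (h : ∀ x : ℓ∞(A), (∀ a, |x a| ≤ |y a|) → f x ≤ r) : absEnvelope f y ≤ r :=
  csSup_le ((nonempty_setOf_abs_le y).image f) (Set.forall_mem_image.2 h)

theorem exists_abs_le_lt_of_lt_absEnvelope {f : ℓ∞(A) → ℝ} {y : ℓ∞(A)} {r : ℝ}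
    (h : r < absEnvelope f y) : ∃ x : ℓ∞(A), (∀ a, |x a| ≤ |y a|) ∧ r < f x := by
  obtain ⟨_, ⟨x, hxy, rfl⟩, hx⟩ := exists_lt_of_lt_csSup ((nonempty_setOf_abs_le y).image f) h
  exact ⟨x, hxy, hx⟩

theorem posHomA_absEnvelope {f : ℓ∞(A) → ℝ} (hf : PosHomA f) : PosHomA (absEnvelope f) := by
  intro c hc y
  rcases hc.eq_or_lt with rfl | hc
  · have hzero : {x : ℓ∞(A) | ∀ a, |x a| ≤ |((0 : ℝ) • y) a|} = {0} := by
      ext x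
      simp only [Set.mem_ofPred_eq, Set.mem_singleton_iff, zero_smul, lp.coeFn_zero,
        Pi.zero_apply, abs_zero, abs_nonpos_iff, lp.ext_iff]
      exact ⟨funext, congrFun⟩
    rw [absEnvelope, hzero, Set.image_singleton, hf.map_zero, csSup_singleton, zero_mul]
  · have himage : f '' (c • {x : ℓ∞(A) | ∀ a, |x a| ≤ |y a|})
        = c • f '' {x | ∀ a, |x a| ≤ |y a|} := by
      rw [← Set.image_smul, ← Set.image_smul, Set.image_image, Set.image_image]
      simp_rw [hf c hc.le, smul_eq_mul]
    rw [absEnvelope, setOf_abs_le_smul hc.ne', himage, Real.sSup_smul_of_nonneg hc.le,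
      smul_eq_mul, absEnvelope]

section envelope

variable {f : ℓ∞(A) → ℝ} (hf : PosHomA f) (hfin : fblNormA f ≠ ∞)
include hf hfin

theorem bddAbove_image_setOf_abs_le (y : ℓ∞(A)) :
    BddAbove (f '' {x | ∀ a, |x a| ≤ |y a|}) := by
  refine ⟨(‖y‖ + 1) * (fblNormA f).toReal, Set.forall_mem_image.2 fun x hx => ?_⟩
  refine hf.le_mul_toReal_fblNormA hfin (by positivity) fun a => (hx a).trans ?_
  have hya := lp.norm_apply_le_norm ENNReal.top_ne_zero y a
  rw [Real.norm_eq_abs] at hya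
  linarith

theorem le_absEnvelope {x y : ℓ∞(A)} (hxy : ∀ a, |x a| ≤ |y a|) :
    f x ≤ absEnvelope f y :=
  le_csSup (bddAbove_image_setOf_abs_le hf hfin y) ⟨x, hxy, rfl⟩

theorem absEnvelope_nonneg (y : ℓ∞(A)) : 0 ≤ absEnvelope f y :=
  hf.map_zero ▸ le_absEnvelope hf hfin fun a => by simp

theorem fblNormA_absEnvelope_le : fblNormA (absEnvelope f) ≤ fblNormA f := by
  rw [← ENNReal.ofReal_toReal hfin]
  refine fblNormA_le_ofReal fun l hl => List.sum_map_le_of_forall_approx _ _ _ fun δ hδ => ?_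
  have happrox : ∀ y : ℓ∞(A), ∃ x : ℓ∞(A), (∀ a, |x a| ≤ |y a|) ∧ absEnvelope f y - δ < f x :=
    fun y => exists_abs_le_lt_of_lt_absEnvelope (sub_lt_self _ hδ)
  choose p hp hpδ using happrox
  refine ⟨fun y => |f (p y)|, fun y => ?_, ?_⟩
  · rw [abs_of_nonneg (absEnvelope_nonneg hf hfin y)]
    linarith [le_abs_self (f (p y)), hpδ y]
  · simpa only [List.map_map, Function.comp_def] using
      sum_le_toReal_fblNormA hfin (hl.map_of_abs_le hp)

end envelope

end

theorem stmt9_general {A : Type*} (f : lp (fun _ : A => ℝ) ⊤ → ℝ)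
    (hf : MaximalA f) :
    ∀ x y : lp (fun _ : A => ℝ) ⊤, (∀ a, |x a| ≤ |y a|) → f x ≤ f y := by
  obtain ⟨hhom, hnonneg, hfin, hmax⟩ := hf
  have hle : ∀ x, f x ≤ absEnvelope f x := fun x => le_absEnvelope hhom hfin.ne fun _ => le_rfl
  have hnorm : fblNormA (absEnvelope f) = fblNormA f :=
    (fblNormA_absEnvelope_le hhom hfin.ne).antisymm <| fblNormA_mono fun x => by
      rw [abs_of_nonneg (hnonneg x), abs_of_nonneg (absEnvelope_nonneg hhom hfin.ne x)]
      exact hle x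
  have henv : absEnvelope f = f :=
    hmax _ (posHomA_absEnvelope hhom) (absEnvelope_nonneg hhom hfin.ne) (hnorm ▸ hfin) hle hnorm
  intro x y hxy
  simpa only [henv] using le_absEnvelope hhom hfin.ne hxy

/-- a maximal `f ∈ H_0[ℓ1(A)]_+` is monotone w.r.t. absolute value. -/
theorem stmt9 {A : Type*} [Nonempty A] (f : lp (fun _ : A => ℝ) ⊤ → ℝ)
    (hf : MaximalA f) :
    ∀ x y : lp (fun _ : A => ℝ) ⊤, (∀ a, |x a| ≤ |y a|) → f x ≤ f y :=
  stmt9_general f hf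
end
end

section
/- Let A be a nonempty set and f ∈ H_0[ℓ1(A)]_+ maximal. Then f is superadditive on positive elements: Σ_{k=1}^n f(x_k*) ≤ f(Σ_{k=1}^n x_k*) for every n ∈ ℕ and x_1*,…,x_n* ∈ ℓ∞(A)_+. -/
open scoped ENNReal

noncomputable section

/-! The envelope `f̂ x := sup { Σ f(y_k) : Σ_k |y_k| ≤ |x| pointwise }` of a nonnegative positively
homogeneous `f` is again nonnegative, positively homogeneous and lies above `f`. Any family
admissible for `f̂` can be refined, up to `ε`, into a family admissible for `f`, so `f̂` has the
same FBL-norm as `f`. Maximality forces `f̂ = f`, and a family of nonnegative `x_k` is one of the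
decompositions of `Σ x_k` competing in the supremum defining `f̂ (Σ x_k)`. -/

namespace FBLMaximal

variable {A : Type*}

local notation "ℓ∞[" A "]" => lp (fun _ : A => ℝ) ⊤

def absSum (l : List ℓ∞[A]) (a : A) : ℝ :=
  (l.map fun y => |y a|).sum

def decompositionSums (f : ℓ∞[A] → ℝ) (x : ℓ∞[A]) : Set ℝ :=
  {s | ∃ l : List ℓ∞[A], (∀ a, absSum l a ≤ |x a|) ∧ s = (l.map f).sum}

def envelope (f : ℓ∞[A] → ℝ) (x : ℓ∞[A]) : ℝ :=
  sSup (decompositionSums f x)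

lemma zero_mem_decompositionSums (f : ℓ∞[A] → ℝ) (x : ℓ∞[A]) :
    (0 : ℝ) ∈ decompositionSums f x :=
  ⟨[], fun a => by simp [absSum], by simp⟩

lemma absSum_append (l L : List ℓ∞[A]) (a : A) :
    absSum (l ++ L) a = absSum l a + absSum L a := by
  simp [absSum]

lemma absSum_map_smul {c : ℝ} (hc : 0 ≤ c) (l : List ℓ∞[A]) (a : A) :
    absSum (l.map (c • ·)) a = c * absSum l a := by
  simp [absSum, Function.comp_def, lp.coeFn_smul, abs_mul, abs_of_nonneg hc,
    List.sum_map_mul_left]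

lemma map_abs_of_nonneg {g : ℓ∞[A] → ℝ} (hg : ∀ x, 0 ≤ g x) (l : List ℓ∞[A]) :
    (l.map fun x => |g x|) = l.map g :=
  List.map_congr_left fun y _ => abs_of_nonneg (hg y)

lemma sum_map_smul_of_posHomA {f : ℓ∞[A] → ℝ} (hf : PosHomA f) {c : ℝ} (hc : 0 ≤ c)
    (l : List ℓ∞[A]) : ((l.map (c • ·)).map f).sum = c * (l.map f).sum := by
  simp [Function.comp_def, hf c hc, List.sum_map_mul_left]

section

variable {f : ℓ∞[A] → ℝ} (hpos : PosHomA f) (hnn : ∀ x, 0 ≤ f x) (hfin : fblNormA f < ∞)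
include hnn hfin

lemma sum_le_fblNormA {l : List ℓ∞[A]} (hl : AdmissibleA l) :
    (l.map f).sum ≤ (fblNormA f).toReal := by
  have hle : ENNReal.ofReal (l.map f).sum ≤ fblNormA f := by
    have := le_iSup (fun l : {l // AdmissibleA l} =>
      ENNReal.ofReal ((l.1.map fun x => |f x|).sum)) ⟨l, hl⟩
    rwa [map_abs_of_nonneg hnn] at this
  exact (ENNReal.ofReal_le_iff_le_toReal hfin.ne).1 hle

include hpos

lemma sum_le_mul_fblNormA {l : List ℓ∞[A]} {c : ℝ} (hc : 0 < c) (hl : ∀ a, absSum l a ≤ c) :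
    (l.map f).sum ≤ c * (fblNormA f).toReal := by
  have hadm : AdmissibleA (l.map (c⁻¹ • ·)) := fun a => by
    show absSum _ a ≤ 1
    rw [absSum_map_smul (inv_nonneg.2 hc.le), inv_mul_le_iff₀ hc, mul_one]
    exact hl a
  have := sum_le_fblNormA hnn hfin hadm
  rwa [sum_map_smul_of_posHomA hpos (inv_nonneg.2 hc.le), inv_mul_le_iff₀ hc] at this

lemma bddAbove_decompositionSums (x : ℓ∞[A]) : BddAbove (decompositionSums f x) := by
  refine ⟨(‖x‖ + 1) * (fblNormA f).toReal, ?_⟩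
  rintro s ⟨l, hl, rfl⟩
  refine sum_le_mul_fblNormA hpos hnn hfin (by positivity) fun a => (hl a).trans ?_
  have := lp.norm_apply_le_norm ENNReal.top_ne_zero x a
  rw [Real.norm_eq_abs] at this
  linarith

lemma le_envelope (x : ℓ∞[A]) : f x ≤ envelope f x :=
  le_csSup (bddAbove_decompositionSums hpos hnn hfin x) ⟨[x], fun a => by simp [absSum], by simp⟩

lemma envelope_nonneg (x : ℓ∞[A]) : 0 ≤ envelope f x :=
  le_csSup (bddAbove_decompositionSums hpos hnn hfin x) (zero_mem_decompositionSums f x)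

lemma envelope_smul_le {c : ℝ} (hc : 0 < c) (x : ℓ∞[A]) :
    envelope f (c • x) ≤ c * envelope f x := by
  refine csSup_le ⟨0, zero_mem_decompositionSums f _⟩ ?_
  rintro s ⟨l, hl, rfl⟩
  have hmem : c⁻¹ * (l.map f).sum ∈ decompositionSums f x := by
    refine ⟨l.map (c⁻¹ • ·), fun a => ?_,
      (sum_map_smul_of_posHomA hpos (inv_nonneg.2 hc.le) l).symm⟩
    have := hl a
    rw [lp.coeFn_smul, Pi.smul_apply, smul_eq_mul, abs_mul, abs_of_pos hc] at this
    rw [absSum_map_smul (inv_nonneg.2 hc.le), inv_mul_le_iff₀ hc]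
    exact this
  have := le_csSup (bddAbove_decompositionSums hpos hnn hfin x) hmem
  rwa [inv_mul_le_iff₀ hc] at this

lemma posHomA_envelope : PosHomA (envelope f) := by
  intro c hc x
  rcases hc.eq_or_lt with rfl | hc
  · -- `f̂ 0 = f̂ (2⁻¹ • 0) ≤ 2⁻¹ * f̂ 0` and `f̂ 0 ≥ 0`
    have := envelope_smul_le hpos hnn hfin (c := 2⁻¹) (by norm_num) (0 : ℓ∞[A])
    rw [smul_zero] at this
    rw [zero_smul, zero_mul]
    linarith [envelope_nonneg hpos hnn hfin (0 : ℓ∞[A])]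
  · refine le_antisymm (envelope_smul_le hpos hnn hfin hc x) ?_
    have := envelope_smul_le hpos hnn hfin (inv_pos.2 hc) (c • x)
    rwa [inv_smul_smul₀ hc.ne', le_inv_mul_iff₀ hc] at this

end

lemma exists_sum_envelope_le_add (f : ℓ∞[A] → ℝ) (l : List ℓ∞[A]) {ε : ℝ} (hε : 0 < ε) :
    ∃ L : List ℓ∞[A], (∀ a, absSum L a ≤ absSum l a) ∧
      (l.map (envelope f)).sum ≤ (L.map f).sum + ε := by
  induction l generalizing ε with
  | nil => exact ⟨[], fun a => le_rfl, by simp; linarith⟩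
  | cons x l ih =>
    obtain ⟨L, hL, hsum⟩ := ih (half_pos hε)
    obtain ⟨s, ⟨d, hd, rfl⟩, hs⟩ :=
      exists_lt_of_lt_csSup ⟨0, zero_mem_decompositionSums f x⟩
        (sub_lt_self (envelope f x) (half_pos hε))
    refine ⟨d ++ L, fun a => ?_, ?_⟩
    · rw [absSum_append]
      simpa [absSum] using add_le_add (hd a) (hL a)
    · simp only [List.map_cons, List.sum_cons, List.map_append, List.sum_append]
      linarith

lemma fblNormA_envelope {f : ℓ∞[A] → ℝ} (hpos : PosHomA f) (hnn : ∀ x, 0 ≤ f x)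
    (hfin : fblNormA f < ∞) : fblNormA (envelope f) = fblNormA f := by
  refine le_antisymm (iSup_le fun ⟨l, hl⟩ => ?_) (iSup_mono fun ⟨l, _⟩ => ?_)
  · rw [map_abs_of_nonneg (envelope_nonneg hpos hnn hfin),
      ENNReal.ofReal_le_iff_le_toReal hfin.ne]
    refine le_of_forall_pos_le_add fun ε hε => ?_
    obtain ⟨L, hL, hsum⟩ := exists_sum_envelope_le_add f l hε
    linarith [sum_le_fblNormA hnn hfin fun a => (hL a).trans (hl a)]
  · rw [map_abs_of_nonneg hnn, map_abs_of_nonneg (envelope_nonneg hpos hnn hfin)]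
    exact ENNReal.ofReal_le_ofReal (List.sum_le_sum fun y _ => le_envelope hpos hnn hfin y)

lemma envelope_eq_of_maximalA {f : ℓ∞[A] → ℝ} (hf : MaximalA f) : envelope f = f := by
  obtain ⟨hpos, hnn, hfin, hmax⟩ := hf
  have hnorm := fblNormA_envelope hpos hnn hfin
  exact hmax _ (posHomA_envelope hpos hnn hfin) (envelope_nonneg hpos hnn hfin)
    (hnorm ▸ hfin) (le_envelope hpos hnn hfin) hnorm

lemma sum_mem_decompositionSums (f : ℓ∞[A] → ℝ) {n : ℕ} (x : Fin n → ℓ∞[A])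
    (hx : ∀ k a, 0 ≤ x k a) : ∑ k, f (x k) ∈ decompositionSums f (∑ k, x k) := by
  refine ⟨List.ofFn x, fun a => ?_, by simp [List.sum_ofFn]⟩
  have hsum : ∑ k, |x k a| = (∑ k, x k) a := by
    rw [lp.coeFn_sum, Finset.sum_apply]
    exact Finset.sum_congr rfl fun k _ => abs_of_nonneg (hx k a)
  simpa [absSum, List.sum_ofFn, hsum] using le_abs_self ((∑ k, x k) a)

end FBLMaximal

open FBLMaximal in
theorem stmt10_general {A : Type*} (f : lp (fun _ : A => ℝ) ⊤ → ℝ)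
    (hf : MaximalA f) :
    ∀ (n : ℕ) (x : Fin n → lp (fun _ : A => ℝ) ⊤), (∀ k, ∀ a, 0 ≤ x k a) →
      ∑ k, f (x k) ≤ f (∑ k, x k) := by
  intro n x hx
  have henv := envelope_eq_of_maximalA hf
  obtain ⟨hpos, hnn, hfin, -⟩ := hf
  calc ∑ k, f (x k) ≤ envelope f (∑ k, x k) :=
        le_csSup (bddAbove_decompositionSums hpos hnn hfin _) (sum_mem_decompositionSums f x hx)
    _ = f (∑ k, x k) := congrFun henv _

/-- a maximal `f ∈ H_0[ℓ1(A)]_+` is superadditive on nonnegative elements. -/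
theorem stmt10 {A : Type*} [Nonempty A] (f : lp (fun _ : A => ℝ) ⊤ → ℝ)
    (hf : MaximalA f) :
    ∀ (n : ℕ) (x : Fin n → lp (fun _ : A => ℝ) ⊤), (∀ k, ∀ a, 0 ≤ x k a) →
      ∑ k, f (x k) ≤ f (∑ k, x k) :=
  stmt10_general f hf
end
end

section
/- Let A be a nonempty set and f ∈ H_0[ℓ1(A)]_+ maximal. Then ||f||_{FBL[ℓ1(A)]} = ||f||_∞, where ||f||_∞ = sup{ |f(x*)| : x* ∈ B_{ℓ∞(A)} }. -/
open scoped ENNReal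

noncomputable section

/-!
For `f ≥ 0` positively homogeneous with finite FBL norm, the envelope
`f̂ x = sup {f y₁ + ⋯ + f yₙ : |y₁| + ⋯ + |yₙ| ≤ |x|}` lies above `f`, is again positively
homogeneous, and has the same FBL norm, because splitting every member of an admissible list
yields an admissible list. Maximality forces `f̂ = f`, so `f` is superadditive along such
splittings. An admissible list `x₁*, …, xₙ*` is a splitting of the constant function `1`,
whence `∑ f xₖ* ≤ f 1 ≤ ‖f‖_∞`; the reverse inequality comes from one-element lists.
-/

section

variable {A : Type*}

local notation "ℓ∞(" A ")" => lp (fun _ : A => ℝ) ⊤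

namespace FBL

def sumAbs (l : List ℓ∞(A)) (a : A) : ℝ :=
  (l.map fun y => |y a|).sum

lemma admissibleA_iff {l : List ℓ∞(A)} : AdmissibleA l ↔ ∀ a, sumAbs l a ≤ 1 := Iff.rfl

@[simp]
lemma sumAbs_nil (a : A) : sumAbs [] a = 0 := rfl

@[simp]
lemma sumAbs_cons (x : ℓ∞(A)) (l : List ℓ∞(A)) (a : A) :
    sumAbs (x :: l) a = |x a| + sumAbs l a := by
  simp [sumAbs]

@[simp]
lemma sumAbs_append (l l' : List ℓ∞(A)) (a : A) :
    sumAbs (l ++ l') a = sumAbs l a + sumAbs l' a := by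
  simp [sumAbs]

lemma sumAbs_map_smul {c : ℝ} (hc : 0 ≤ c) (l : List ℓ∞(A)) (a : A) :
    sumAbs (l.map (c • ·)) a = c * sumAbs l a := by
  simp [sumAbs, Function.comp_def, abs_mul, abs_of_nonneg hc, List.sum_map_mul_left]

lemma sum_map_smul {f : ℓ∞(A) → ℝ} (hf : PosHomA f) {c : ℝ} (hc : 0 ≤ c) (l : List ℓ∞(A)) :
    ((l.map (c • ·)).map f).sum = c * (l.map f).sum := by
  simp [Function.comp_def, hf c hc, List.sum_map_mul_left]

lemma ofReal_sum_le_fblNormA (f : ℓ∞(A) → ℝ) {l : List ℓ∞(A)} (hl : AdmissibleA l) :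
    ENNReal.ofReal (l.map fun x => |f x|).sum ≤ fblNormA f :=
  le_iSup_of_le (⟨l, hl⟩ : {l // AdmissibleA l}) le_rfl

lemma fblNormA_mono {f g : ℓ∞(A) → ℝ} (h : ∀ x, |f x| ≤ |g x|) : fblNormA f ≤ fblNormA g :=
  iSup_mono fun _ => ENNReal.ofReal_le_ofReal (List.sum_le_sum fun x _ => h x)

lemma sum_le_fblNormA {f : ℓ∞(A) → ℝ} (hfin : fblNormA f < ∞) {l : List ℓ∞(A)}
    (hl : AdmissibleA l) : (l.map f).sum ≤ (fblNormA f).toReal :=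
  calc (l.map f).sum ≤ (l.map fun x => |f x|).sum := List.sum_le_sum fun _ _ => le_abs_self _
    _ ≤ (fblNormA f).toReal :=
      (ENNReal.ofReal_le_iff_le_toReal hfin.ne).1 (ofReal_sum_le_fblNormA f hl)

lemma sum_le_fblNormA_mul {f : ℓ∞(A) → ℝ} (hf : PosHomA f) (hfin : fblNormA f < ∞)
    {l : List ℓ∞(A)} {t : ℝ} (ht : 0 < t) (hl : ∀ a, sumAbs l a ≤ t) :
    (l.map f).sum ≤ (fblNormA f).toReal * t := by
  have hadm : AdmissibleA (l.map (t⁻¹ • ·)) := fun a => by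
    rw [← sumAbs, sumAbs_map_smul (inv_nonneg.2 ht.le)]
    exact inv_mul_le_one_of_le₀ (hl a) ht.le
  have := sum_le_fblNormA hfin hadm
  rw [sum_map_smul hf (inv_nonneg.2 ht.le)] at this
  rwa [inv_mul_le_iff₀ ht, mul_comm] at this

def splitSums (f : ℓ∞(A) → ℝ) (x : ℓ∞(A)) : Set ℝ :=
  {s | ∃ l : List ℓ∞(A), (∀ a, sumAbs l a ≤ |x a|) ∧ (l.map f).sum = s}

def envelope (f : ℓ∞(A) → ℝ) (x : ℓ∞(A)) : ℝ :=
  sSup (splitSums f x)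

variable {f : ℓ∞(A) → ℝ}

lemma zero_mem_splitSums (x : ℓ∞(A)) : 0 ∈ splitSums f x :=
  ⟨[], fun a => by simp, rfl⟩

lemma bddAbove_splitSums (hf : PosHomA f) (hfin : fblNormA f < ∞) (x : ℓ∞(A)) :
    BddAbove (splitSums f x) := by
  refine ⟨(fblNormA f).toReal * (‖x‖ + 1), ?_⟩
  rintro _ ⟨l, hl, rfl⟩
  refine sum_le_fblNormA_mul hf hfin (by positivity) fun a => (hl a).trans ?_
  have := lp.norm_apply_le_norm ENNReal.top_ne_zero x a
  rw [Real.norm_eq_abs] at this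
  linarith

lemma sum_le_envelope (hf : PosHomA f) (hfin : fblNormA f < ∞) {x : ℓ∞(A)}
    {l : List ℓ∞(A)} (hl : ∀ a, sumAbs l a ≤ |x a|) : (l.map f).sum ≤ envelope f x :=
  le_csSup (bddAbove_splitSums hf hfin x) ⟨l, hl, rfl⟩

lemma envelope_nonneg (hf : PosHomA f) (hfin : fblNormA f < ∞) (x : ℓ∞(A)) :
    0 ≤ envelope f x :=
  le_csSup (bddAbove_splitSums hf hfin x) (zero_mem_splitSums x)

lemma le_envelope (hf : PosHomA f) (hfin : fblNormA f < ∞) (x : ℓ∞(A)) :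
    f x ≤ envelope f x := by
  simpa using sum_le_envelope hf hfin (l := [x]) fun a => by simp

lemma envelope_smul_le (hf : PosHomA f) (hfin : fblNormA f < ∞) {c : ℝ} (hc : 0 < c)
    (x : ℓ∞(A)) : envelope f (c • x) ≤ c * envelope f x := by
  refine csSup_le ⟨0, zero_mem_splitSums _⟩ ?_
  rintro _ ⟨l, hl, rfl⟩
  have hl' : ∀ a, sumAbs (l.map (c⁻¹ • ·)) a ≤ |x a| := fun a => by
    rw [sumAbs_map_smul (inv_nonneg.2 hc.le), inv_mul_le_iff₀ hc]
    simpa [abs_mul, abs_of_pos hc] using hl a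
  have := sum_le_envelope hf hfin hl'
  rwa [sum_map_smul hf (inv_nonneg.2 hc.le), inv_mul_le_iff₀ hc] at this

lemma posHomA_envelope (hf : PosHomA f) (hfin : fblNormA f < ∞) : PosHomA (envelope f) := by
  have hsmul : ∀ c : ℝ, 0 < c → ∀ x, envelope f (c • x) = c * envelope f x := by
    intro c hc x
    refine le_antisymm (envelope_smul_le hf hfin hc x) ?_
    have := envelope_smul_le hf hfin (inv_pos.2 hc) (c • x)
    rwa [inv_smul_smul₀ hc.ne', le_inv_mul_iff₀ hc] at this
  intro c hc x
  rcases hc.eq_or_lt with rfl | hc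
  · have := hsmul 2 two_pos 0
    rw [smul_zero] at this
    rw [zero_smul, zero_mul]
    linarith
  · exact hsmul c hc x

/-- `l₀` collects the splittings already chosen for the members of the list preceding `L`. -/
lemma sum_envelope_add_sum_le (hfin : fblNormA f < ∞) (L : List ℓ∞(A)) :
    ∀ l₀ : List ℓ∞(A), (∀ a, sumAbs L a + sumAbs l₀ a ≤ 1) →
      (L.map (envelope f)).sum + (l₀.map f).sum ≤ (fblNormA f).toReal := by
  induction L with
  | nil =>
    intro l₀ h
    simpa using sum_le_fblNormA hfin (admissibleA_iff.2 fun a => by simpa using h a)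
  | cons x L ih =>
    intro l₀ h
    have hx : envelope f x ≤
        (fblNormA f).toReal - (L.map (envelope f)).sum - (l₀.map f).sum := by
      refine csSup_le ⟨0, zero_mem_splitSums x⟩ ?_
      rintro _ ⟨lx, hlx, rfl⟩
      have := ih (lx ++ l₀) fun a => by
        have := h a
        simp only [sumAbs_cons, sumAbs_append] at this ⊢
        linarith [hlx a]
      simp only [List.map_append, List.sum_append] at this
      linarith
    simp only [List.map_cons, List.sum_cons]
    linarith

lemma fblNormA_envelope (hf : PosHomA f) (hpos : ∀ x, 0 ≤ f x) (hfin : fblNormA f < ∞) :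
    fblNormA (envelope f) = fblNormA f := by
  refine le_antisymm (iSup_le fun ⟨L, hL⟩ => ?_) (fblNormA_mono fun x => ?_)
  · have := sum_envelope_add_sum_le hfin L [] fun a => by simpa using admissibleA_iff.1 hL a
    rw [List.map_nil, List.sum_nil, add_zero] at this
    refine ENNReal.ofReal_le_of_le_toReal (le_of_eq_of_le ?_ this)
    exact congrArg List.sum (List.map_congr_left fun x _ => abs_of_nonneg
      (envelope_nonneg hf hfin x))
  · rw [abs_of_nonneg (hpos x), abs_of_nonneg (envelope_nonneg hf hfin x)]
    exact le_envelope hf hfin x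

end FBL

namespace MaximalA

open FBL

variable {f : ℓ∞(A) → ℝ}

lemma envelope_eq (hf : MaximalA f) : envelope f = f := by
  obtain ⟨hph, hpos, hfin, hmax⟩ := hf
  have hnorm := fblNormA_envelope hph hpos hfin
  exact hmax _ (posHomA_envelope hph hfin) (envelope_nonneg hph hfin) (hnorm ▸ hfin)
    (le_envelope hph hfin) hnorm

lemma sum_le (hf : MaximalA f) {x : ℓ∞(A)} {l : List ℓ∞(A)} (hl : ∀ a, sumAbs l a ≤ |x a|) :
    (l.map f).sum ≤ f x := by
  simpa only [envelope_eq hf] using sum_le_envelope hf.1 hf.2.2.1 hl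

end MaximalA

end

theorem stmt11_general {A : Type*} (f : lp (fun _ : A => ℝ) ⊤ → ℝ)
    (hf : MaximalA f) :
    fblNormA f =
      ⨆ x : {x : lp (fun _ : A => ℝ) ⊤ // ‖x‖ ≤ 1}, ENNReal.ofReal |f x.1| := by
  have hone : ‖(1 : lp (fun _ : A => ℝ) ⊤)‖ ≤ 1 :=
    lp.norm_le_of_forall_le zero_le_one fun a => by simp [lp.infty_coeFn_one]
  refine le_antisymm (iSup_le fun ⟨L, hL⟩ => ?_) (iSup_le fun ⟨x, hx⟩ => ?_)
  · have hsum : (L.map fun x => |f x|).sum ≤ |f 1| := by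
      simp only [abs_of_nonneg (hf.2.1 _)]
      exact hf.sum_le fun a => by simpa [lp.infty_coeFn_one] using FBL.admissibleA_iff.1 hL a
    exact (ENNReal.ofReal_le_ofReal hsum).trans
      (le_iSup_of_le (⟨1, hone⟩ : {x // ‖x‖ ≤ 1}) le_rfl)
  · refine le_of_eq_of_le (by simp) (FBL.ofReal_sum_le_fblNormA f (l := [x]) fun a => ?_)
    simpa [Real.norm_eq_abs] using (lp.norm_apply_le_norm ENNReal.top_ne_zero x a).trans hx

/-- a maximal `f ∈ H_0[ℓ1(A)]_+` satisfies `‖f‖_{FBL[ℓ1(A)]} = ‖f‖_∞`. -/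
theorem stmt11 {A : Type*} [Nonempty A] (f : lp (fun _ : A => ℝ) ⊤ → ℝ)
    (hf : MaximalA f) :
    fblNormA f =
      ⨆ x : {x : lp (fun _ : A => ℝ) ⊤ // ‖x‖ ≤ 1}, ENNReal.ofReal |f x.1| :=
  stmt11_general f hf
end
end

section
/- Let A be a nonempty set and φ : ℓ∞(A) → ℝ a continuous linear functional. Define g_φ(x*) = |φ(|x*|)| for x* ∈ ℓ∞(A). Then g_φ is nonnegative and positively homogeneous, and ||g_φ||_{FBL[ℓ1(A)]} = sup{ |φ(x*)| : x* ∈ B_{ℓ∞(A)} } = ||φ||. -/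
open scoped ENNReal

noncomputable section

/-- pointwise absolute value on `ℓ∞(A)`. -/
def lpAbs {A : Type*} (x : lp (fun _ : A => ℝ) ⊤) : lp (fun _ : A => ℝ) ⊤ :=
  ⟨fun a => |x a|, by
    have h := lp.memℓp x
    have h2 : Memℓp (fun a => |(x : _ → ℝ) a|) ⊤ := by
      rw [memℓp_infty_iff] at h ⊢
      simpa [Real.norm_eq_abs, abs_abs] using h
    exact h2⟩

open scoped lp

/-!
For an admissible family `x₁, …, xₙ`, choosing signs `εₖ` of `φ |xₖ|` gives
`∑ |φ |xₖ|| = φ (∑ εₖ |xₖ|)`, and `‖∑ εₖ |xₖ|‖∞ ≤ sup_a ∑ |xₖ a| ≤ 1`; hence `‖g_φ‖ ≤ ‖φ‖`.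
Conversely, for `‖x‖ ≤ 1` the pair `x⁺, x⁻` is admissible, `|x⁺| = x⁺`, `|x⁻| = x⁻`, and
`|φ x| ≤ |φ x⁺| + |φ x⁻| = g_φ x⁺ + g_φ x⁻ ≤ ‖g_φ‖`.
-/

lemma lp.list_sum_apply {α : Type*} {E : α → Type*} [∀ i, NormedAddCommGroup (E i)]
    {p : ℝ≥0∞} (l : List (lp E p)) (i : α) : l.sum i = (l.map fun x => x i).sum :=
  map_list_sum ((Pi.evalAddMonoidHom E i).comp (lp.coeFnAddMonoidHom E p)) l

section
variable {A : Type*}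

@[simp]
lemma lpAbs_apply (x : ℓ^∞(A, ℝ)) (a : A) : lpAbs x a = |x a| := rfl

lemma lpAbs_smul_of_nonneg {c : ℝ} (hc : 0 ≤ c) (x : ℓ^∞(A, ℝ)) :
    lpAbs (c • x) = c • lpAbs x := by
  ext a; simp [abs_mul, abs_of_nonneg hc]

lemma lpAbs_eq_self_of_nonneg {x : ℓ^∞(A, ℝ)} (hx : ∀ a, 0 ≤ x a) : lpAbs x = x := by
  ext a; simp [abs_of_nonneg (hx a)]

lemma norm_list_sum_smul_lpAbs_le_one {l : List ℓ^∞(A, ℝ)} (hl : AdmissibleA l)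
    {ε : ℓ^∞(A, ℝ) → ℝ} (hε : ∀ x, |ε x| ≤ 1) :
    ‖(l.map fun x => ε x • lpAbs x).sum‖ ≤ 1 := by
  refine lp.norm_le_of_forall_le zero_le_one fun a => ?_
  rw [Real.norm_eq_abs, lp.list_sum_apply, List.map_map]
  calc _ ≤ ((l.map _).map abs).sum := List.le_sum_of_subadditive abs abs_zero.le abs_add_le _
    _ ≤ (l.map fun x => |x a|).sum := by
        rw [List.map_map]
        refine List.sum_le_sum fun x _ => ?_
        simpa [abs_mul] using mul_le_of_le_one_left (abs_nonneg _) (hε x)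
    _ ≤ 1 := hl a

/-- The positive part `max x 0`, written as `(x + |x|) / 2` so that it is visibly in `ℓ∞(A)`. -/
def lpPosPart (x : ℓ^∞(A, ℝ)) : ℓ^∞(A, ℝ) := (2 : ℝ)⁻¹ • (x + lpAbs x)

lemma lpPosPart_apply (x : ℓ^∞(A, ℝ)) (a : A) : lpPosPart x a = (x a + |x a|) / 2 := by
  simp only [lpPosPart, lp.coeFn_smul, lp.coeFn_add, Pi.smul_apply, Pi.add_apply, lpAbs_apply,
    smul_eq_mul]
  ring

lemma lpAbs_lpPosPart (x : ℓ^∞(A, ℝ)) : lpAbs (lpPosPart x) = lpPosPart x :=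
  lpAbs_eq_self_of_nonneg fun a => by
    rw [lpPosPart_apply]; linarith [neg_abs_le (x a)]

lemma lpPosPart_sub_lpPosPart_neg (x : ℓ^∞(A, ℝ)) : lpPosPart x - lpPosPart (-x) = x := by
  ext a
  simp only [lp.coeFn_sub, Pi.sub_apply, lpPosPart_apply, lp.coeFn_neg, Pi.neg_apply, abs_neg]
  ring

lemma admissibleA_lpPosPart_pair {x : ℓ^∞(A, ℝ)} (hx : ‖x‖ ≤ 1) :
    AdmissibleA [lpPosPart x, lpPosPart (-x)] := fun a => by
  have hxa : |x a| ≤ 1 :=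
    (Real.norm_eq_abs _ ▸ lp.norm_apply_le_norm ENNReal.top_ne_zero x a).trans hx
  simp only [List.map_cons, List.map_nil, List.sum_cons, List.sum_nil, add_zero]
  rw [← lpAbs_apply, ← lpAbs_apply, lpAbs_lpPosPart, lpAbs_lpPosPart]
  simp only [lpPosPart_apply, lp.coeFn_neg, Pi.neg_apply, abs_neg]
  linarith

end

section
variable {A : Type*} (φ : ℓ^∞(A, ℝ) →L[ℝ] ℝ)

lemma posHomA_abs_apply_lpAbs : PosHomA fun x : ℓ^∞(A, ℝ) => |φ (lpAbs x)| := fun c hc x => by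
  dsimp only
  rw [lpAbs_smul_of_nonneg hc, map_smul, smul_eq_mul, abs_mul, abs_of_nonneg hc]

lemma sum_abs_apply_lpAbs_le_opNorm {l : List ℓ^∞(A, ℝ)} (hl : AdmissibleA l) :
    (l.map fun x => |φ (lpAbs x)|).sum ≤ ‖φ‖ := by
  set s := (l.map fun x => (SignType.sign (φ (lpAbs x)) : ℝ) • lpAbs x).sum
  have hs : ‖s‖ ≤ 1 := norm_list_sum_smul_lpAbs_le_one hl fun x => by
    rcases SignType.sign (φ (lpAbs x)) with _ | _ | _ <;> simp
  calc (l.map fun x => |φ (lpAbs x)|).sum = φ s := by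
        simp [s, map_list_sum, List.map_map, Function.comp_def, sign_mul_self]
    _ ≤ ‖φ‖ * ‖s‖ := (le_abs_self _).trans (φ.le_opNorm s)
    _ ≤ ‖φ‖ := mul_le_of_le_one_right φ.opNorm_nonneg hs

lemma fblNormA_abs_apply_lpAbs_le :
    fblNormA (fun x : ℓ^∞(A, ℝ) => |φ (lpAbs x)|) ≤ ENNReal.ofReal ‖φ‖ :=
  iSup_le fun l => ENNReal.ofReal_le_ofReal <| by
    simpa only [abs_abs] using sum_abs_apply_lpAbs_le_opNorm φ l.2

lemma abs_apply_le_fblNormA_abs_apply_lpAbs {x : ℓ^∞(A, ℝ)} (hx : ‖x‖ ≤ 1) :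
    ENNReal.ofReal |φ x| ≤ fblNormA (fun x : ℓ^∞(A, ℝ) => |φ (lpAbs x)|) := by
  refine le_trans ?_ (le_iSup _ ⟨_, admissibleA_lpPosPart_pair hx⟩)
  refine ENNReal.ofReal_le_ofReal ?_
  simp only [List.map_cons, List.map_nil, List.sum_cons, List.sum_nil, add_zero, abs_abs,
    lpAbs_lpPosPart]
  calc |φ x| = |φ (lpPosPart x) - φ (lpPosPart (-x))| := by
        rw [← map_sub, lpPosPart_sub_lpPosPart_neg]
    _ ≤ _ := abs_sub _ _

end

theorem stmt12_general {A : Type*} (φ : lp (fun _ : A => ℝ) ⊤ →L[ℝ] ℝ) :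
    (∀ x, 0 ≤ |φ (lpAbs x)|) ∧
    PosHomA (fun x : lp (fun _ : A => ℝ) ⊤ => |φ (lpAbs x)|) ∧
    fblNormA (fun x : lp (fun _ : A => ℝ) ⊤ => |φ (lpAbs x)|) = ENNReal.ofReal ‖φ‖ := by
  refine ⟨fun x => abs_nonneg _, posHomA_abs_apply_lpAbs φ, ?_⟩
  have hle := fblNormA_abs_apply_lpAbs_le φ
  have hfin := ne_top_of_le_ne_top ENNReal.ofReal_ne_top hle
  refine le_antisymm hle ?_
  rw [ENNReal.ofReal_le_iff_le_toReal hfin]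
  refine φ.opNorm_le_of_unit_norm ENNReal.toReal_nonneg fun x hx => ?_
  rw [Real.norm_eq_abs, ← ENNReal.ofReal_le_iff_le_toReal hfin]
  exact abs_apply_le_fblNormA_abs_apply_lpAbs φ hx.le

/-- for a bounded linear functional `φ` on `ℓ∞(A)`, the function
`g_φ(x*) = |φ(|x*|)|` is nonnegative, positively homogeneous, and `‖g_φ‖_{FBL[ℓ1(A)]} = ‖φ‖`. -/
theorem stmt12 {A : Type*} [Nonempty A] (φ : lp (fun _ : A => ℝ) ⊤ →L[ℝ] ℝ) :
    (∀ x, 0 ≤ |φ (lpAbs x)|) ∧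
    PosHomA (fun x : lp (fun _ : A => ℝ) ⊤ => |φ (lpAbs x)|) ∧
    fblNormA (fun x : lp (fun _ : A => ℝ) ⊤ => |φ (lpAbs x)|) = ENNReal.ofReal ‖φ‖ :=
  stmt12_general φ
end
end
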